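/- For each 1 ≤ k ≤ m, define θ_k on 𝒩_k as follows: for (N, A) ∈ 𝒩_k, let M′ = ₋ₐ(M ∖ (E_{k−1} − N) / N); set θ_k(N, A) = (N − {e_k}, A) if e_k ∈ N; θ_k(N, A) = (N, A) if e_k ∉ N and ₋{e_k}M′ is not acyclic; θ_k(N, A) = (N, A ∪ {e_k}) if e_k ∉ N and ₋{e_k}M′ is acyclic. Then θ_k maps 𝒩_k into 𝒩_{k−1} and is a two-sided inverse of ψ_k: θ_k(ψ_k(N, A)) = (N, A) for all (N, A) ∈ 𝒩_{k−1} and ψ_k(θ_k(N, A)) = (N, A) for all (N, A) ∈ 𝒩_k. -/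

import Mathlib

open Finset

/-- The support of a signed subset `X = (X⁺, X⁻)`. -/
def supp {α : Type} [DecidableEq α] (X : Finset α × Finset α) : Finset α := X.1 ∪ X.2

/-- An oriented matroid on ground set `α`, given by its collection of signed circuits,
satisfying the signed circuit axioms (C1)-(C4). -/
structure OM (α : Type) [DecidableEq α] where
  C : Set (Finset α × Finset α)
  disj : ∀ X ∈ C, Disjoint X.1 X.2
  not_empty_mem : ((∅ : Finset α), (∅ : Finset α)) ∉ C
  neg_mem : ∀ X ∈ C, (X.2, X.1) ∈ C
  incomp : ∀ X ∈ C, ∀ Y ∈ C, supp X ⊆ supp Y → X = Y ∨ X = (Y.2, Y.1)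
  elimAx : ∀ X ∈ C, ∀ Y ∈ C, X ≠ Y → X ≠ (Y.2, Y.1) → ∀ e ∈ X.1 ∩ Y.2,
    ∃ Z ∈ C, Z.1 ⊆ (X.1 ∪ Y.1).erase e ∧ Z.2 ⊆ (X.2 ∪ Y.2).erase e

/-- A collection of signed subsets is acyclic if it contains no positive member. -/
def Acyclic {α : Type} (C : Set (Finset α × Finset α)) : Prop :=
  ∀ X ∈ C, X.2 ≠ ∅

/-- Reorientation of a signed subset by `A`. -/
def reorient {α : Type} [DecidableEq α] (A : Finset α) (X : Finset α × Finset α) :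
    Finset α × Finset α :=
  ((X.1 \ A) ∪ (X.2 ∩ A), (X.2 \ A) ∪ (X.1 ∩ A))

/-- Reorientation of a collection of signed subsets by `A`. -/
def reorientC {α : Type} [DecidableEq α] (A : Finset α)
    (C : Set (Finset α × Finset α)) : Set (Finset α × Finset α) :=
  reorient A '' C

/-- Deletion: keep the members whose support avoids `D`. -/
def delC {α : Type} [DecidableEq α] (D : Finset α)
    (C : Set (Finset α × Finset α)) : Set (Finset α × Finset α) :=
  {X ∈ C | Disjoint (supp X) D}

/-- The pre-circuits of the contraction by `T`. -/
def contrPre {α : Type} [DecidableEq α] (T : Finset α)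
    (C : Set (Finset α × Finset α)) : Set (Finset α × Finset α) :=
  {Z | ∃ Y ∈ C, supp Y \ T ≠ ∅ ∧ Z = (Y.1 \ T, Y.2 \ T)}

/-- Contraction: the support-inclusion-minimal members of `contrPre T C`. -/
def contrC {α : Type} [DecidableEq α] (T : Finset α)
    (C : Set (Finset α × Finset α)) : Set (Finset α × Finset α) :=
  {Z ∈ contrPre T C | ∀ W ∈ contrPre T C, supp W ⊆ supp Z → supp W = supp Z}

/-- `N` is an NBC subset of the underlying matroid of `M`: it contains no
broken circuit, i.e. no circuit of the underlying matroid with its maximal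
element deleted. -/
def IsNBC {α : Type} [DecidableEq α] [LinearOrder α] (M : OM α) (N : Finset α) : Prop :=
  ∀ X ∈ M.C, ∀ h : (supp X).Nonempty, ¬ (supp X).erase ((supp X).max' h) ⊆ N

/-- `E_k = {e₁, …, e_k}`: the first `k` elements of the ground set `Fin m`. -/
def Ek (m k : ℕ) : Finset (Fin m) := Finset.filter (fun i => (i : ℕ) < k) Finset.univ

/-- `M` is loopless: no signed circuit has support of size one. -/
def Loopless {m : ℕ} (M : OM (Fin m)) : Prop := ∀ X ∈ M.C, (supp X).card ≠ 1

/-- `M(N, A) = ₋ₐ(M ∖ (E_k − N) / N)`. -/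
def MNA {m : ℕ} (M : OM (Fin m)) (k : ℕ) (N A : Finset (Fin m)) :
    Set (Finset (Fin m) × Finset (Fin m)) :=
  reorientC A (contrC N (delC (Ek m k \ N) M.C))

/-- The set `𝒩_k` of pairs `(N, A)` with `N ⊆ E_k` an NBC subset of the underlying
matroid, `A ⊆ E − E_k`, and `M(N, A)` acyclic. -/
def NFam {m : ℕ} (M : OM (Fin m)) (k : ℕ) : Set (Finset (Fin m) × Finset (Fin m)) :=
  {p | p.1 ⊆ Ek m k ∧ IsNBC M p.1 ∧ p.2 ⊆ (Ek m k)ᶜ ∧ Acyclic (MNA M k p.1 p.2)}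

open scoped Classical in
/-- The map `ψ_k` (where `j = k - 1` and `e = e_k`), defined on `𝒩_{k-1}`:
`ψ_k(N, A) = (N ∪ {e_k}, A)` if `e_k ∉ A` and `₋{e_k}M(N, A)` is acyclic,
`ψ_k(N, A) = (N, A)` if `e_k ∉ A` and `₋{e_k}M(N, A)` is not acyclic, and
`ψ_k(N, A) = (N, A − {e_k})` if `e_k ∈ A`. -/
noncomputable def psi {m : ℕ} (M : OM (Fin m)) (j : ℕ) (e : Fin m)
    (p : Finset (Fin m) × Finset (Fin m)) : Finset (Fin m) × Finset (Fin m) :=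
  if e ∈ p.2 then (p.1, p.2.erase e)
  else if Acyclic (reorientC {e} (MNA M j p.1 p.2)) then (insert e p.1, p.2)
  else p

open scoped Classical in
/-- The map `θ_k` (where `j = k - 1` and `e = e_k`), defined on `𝒩_k` via
`M′ = ₋ₐ(M ∖ (E_{k−1} − N) / N)`:
`θ_k(N, A) = (N − {e_k}, A)` if `e_k ∈ N`,
`θ_k(N, A) = (N, A)` if `e_k ∉ N` and `₋{e_k}M′` is not acyclic, and
`θ_k(N, A) = (N, A ∪ {e_k})` if `e_k ∉ N` and `₋{e_k}M′` is acyclic. -/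
noncomputable def theta {m : ℕ} (M : OM (Fin m)) (j : ℕ) (e : Fin m)
    (p : Finset (Fin m) × Finset (Fin m)) : Finset (Fin m) × Finset (Fin m) :=
  if e ∈ p.1 then (p.1.erase e, p.2)
  else if Acyclic (reorientC {e} (MNA M j p.1 p.2)) then (p.1, insert e p.2)
  else p


/-!
Case by case, `θ_k` and `ψ_k` undo each other once one knows how acyclicity of the minors changes
between levels `k - 1` and `k`: going up a level contracts `e = e_k` if `e ∈ N` and deletes it
otherwise.

The criterion used throughout: if no circuit of `C` lies in `N`, then `C/N` has a positive circuit
iff some circuit `X` of `C` has `X⁻ ⊆ N`. Take such an `X` with `|X − N|` minimal. If `X − N` were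
not minimal among the sets `W − N`, eliminating the negative elements of `W` outside `N` against
`X`, one at a time, would produce a circuit contradicting the choice of `X`. Hence `X − N` is a
positive circuit of `C/N`.

NBC sets are independent, so acyclicity passes from `N` to `N − e`; since reorienting `e ∈ N`
does not change a contraction by `N`, this settles the case `e ∈ N`. When `e ∉ N`, let `C` be the
reoriented deletion at level `k - 1`. If both `C/N` and `₋e(C/N)` have positive circuits, they come
from circuits through `e` with opposite signs at `e` (since `C∖e/N` is acyclic), and eliminating `e`
between them gives a positive circuit of `C∖e/N`. They are not opposite circuits: `e` exceeds every
element of `N`, so by the NBC condition no circuit lies in `N ∪ {e}`.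
-/

section SignedSets

variable {α : Type} [DecidableEq α]

@[simp] lemma supp_swap (X : Finset α × Finset α) : supp X.swap = supp X :=
  union_comm _ _

lemma mem_reorient_fst {A : Finset α} {X : Finset α × Finset α} {x : α} :
    x ∈ (reorient A X).1 ↔ x ∈ X.1 ∧ x ∉ A ∨ x ∈ X.2 ∧ x ∈ A := by
  simp [reorient]

lemma mem_reorient_snd {A : Finset α} {X : Finset α × Finset α} {x : α} :
    x ∈ (reorient A X).2 ↔ x ∈ X.2 ∧ x ∉ A ∨ x ∈ X.1 ∧ x ∈ A := by
  simp [reorient]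

@[simp] lemma supp_reorient (A : Finset α) (X : Finset α × Finset α) :
    supp (reorient A X) = supp X := by
  ext x
  simp only [supp, mem_union, mem_reorient_fst, mem_reorient_snd]
  tauto

@[simp] lemma reorient_reorient_self (A : Finset α) (X : Finset α × Finset α) :
    reorient A (reorient A X) = X := by
  ext x <;> simp only [mem_reorient_fst, mem_reorient_snd] <;> tauto

lemma reorient_reorient_singleton {A : Finset α} {e : α} (he : e ∉ A)
    (X : Finset α × Finset α) : reorient A (reorient {e} X) = reorient (insert e A) X := by
  ext x <;> by_cases hx : x = e <;>
    simp_all [mem_reorient_fst, mem_reorient_snd]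

lemma reorient_sdiff_of_subset {A T : Finset α} (hAT : A ⊆ T) (X : Finset α × Finset α) :
    ((reorient A X).1 \ T, (reorient A X).2 \ T) = (X.1 \ T, X.2 \ T) := by
  ext x <;> simp only [mem_sdiff, mem_reorient_fst, mem_reorient_snd] <;> have := @hAT x <;>
    tauto

lemma reorient_sdiff (A T : Finset α) (X : Finset α × Finset α) :
    reorient A (X.1 \ T, X.2 \ T) = ((reorient A X).1 \ T, (reorient A X).2 \ T) := by
  ext x <;> simp only [mem_reorient_fst, mem_reorient_snd, mem_sdiff] <;> tauto

lemma disjoint_reorient {A : Finset α} {X : Finset α × Finset α} (h : Disjoint X.1 X.2) :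
    Disjoint (reorient A X).1 (reorient A X).2 := by
  simp only [disjoint_left, mem_reorient_fst, mem_reorient_snd] at h ⊢
  intro x
  have := @h x
  tauto

lemma reorient_subset_erase {A : Finset α} {q : α} {X Y Z : Finset α × Finset α}
    (h1 : Z.1 ⊆ (X.1 ∪ Y.1).erase q) (h2 : Z.2 ⊆ (X.2 ∪ Y.2).erase q) :
    (reorient A Z).1 ⊆ ((reorient A X).1 ∪ (reorient A Y).1).erase q ∧
      (reorient A Z).2 ⊆ ((reorient A X).2 ∪ (reorient A Y).2).erase q := by
  simp only [subset_iff, mem_erase, mem_union, mem_reorient_fst, mem_reorient_snd] at h1 h2 ⊢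
  constructor <;> intro x <;> have := @h1 x <;> have := @h2 x <;> tauto

lemma supp_subset_erase {q : α} {X Y Z : Finset α × Finset α}
    (h1 : Z.1 ⊆ (X.1 ∪ Y.1).erase q) (h2 : Z.2 ⊆ (X.2 ∪ Y.2).erase q) :
    supp Z ⊆ (supp X ∪ supp Y).erase q := by
  simp only [supp, subset_iff, mem_erase, mem_union] at h1 h2 ⊢
  intro x
  have := @h1 x
  have := @h2 x
  tauto

lemma supp_sdiff (T : Finset α) (X : Finset α × Finset α) :
    supp (X.1 \ T, X.2 \ T) = supp X \ T :=
  (union_sdiff_distrib _ _ _).symm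

lemma mem_reorientC {A : Finset α} {C : Set (Finset α × Finset α)} {X : Finset α × Finset α} :
    X ∈ reorientC A C ↔ reorient A X ∈ C :=
  ⟨by rintro ⟨Y, hY, rfl⟩; simpa, fun h => ⟨_, h, reorient_reorient_self A X⟩⟩

lemma reorientC_singleton_reorientC {A : Finset α} {e : α} (he : e ∉ A)
    (C : Set (Finset α × Finset α)) :
    reorientC {e} (reorientC A C) = reorientC (insert e A) C := by
  ext X
  simp only [mem_reorientC, reorient_reorient_singleton he]

end SignedSets

section Minors

variable {α : Type} [DecidableEq α]

lemma contrPre_reorientC (T A : Finset α) (C : Set (Finset α × Finset α)) :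
    contrPre T (reorientC A C) = reorientC A (contrPre T C) := by
  ext Z
  simp only [contrPre, mem_reorientC, Set.mem_ofPred_eq]
  constructor
  · rintro ⟨Y, hY, hne, rfl⟩
    exact ⟨reorient A Y, hY, by rwa [supp_reorient], reorient_sdiff A T Y⟩
  · rintro ⟨Y, hY, hne, hZ⟩
    refine ⟨reorient A Y, by simpa, by rwa [supp_reorient], ?_⟩
    rw [← reorient_sdiff, ← hZ, reorient_reorient_self]

lemma contrC_reorientC (T A : Finset α) (C : Set (Finset α × Finset α)) :
    contrC T (reorientC A C) = reorientC A (contrC T C) := by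
  ext Z
  rw [mem_reorientC]
  simp only [contrC, contrPre_reorientC, Set.mem_ofPred_eq, mem_reorientC]
  refine and_congr_right fun _ => ⟨fun h W hW => ?_, fun h W hW => ?_⟩
  · simpa using h (reorient A W) (by simpa)
  · simpa using h _ hW

lemma contrC_reorientC_of_subset {T A : Finset α} (hAT : A ⊆ T) (C : Set (Finset α × Finset α)) :
    contrC T (reorientC A C) = contrC T C := by
  have hpre : contrPre T (reorientC A C) = contrPre T C := by
    ext Z
    simp only [contrPre, reorientC, Set.mem_ofPred_eq, Set.exists_mem_image, supp_reorient,
      reorient_sdiff_of_subset hAT]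
  simp only [contrC, hpre]

lemma delC_reorientC (D A : Finset α) (C : Set (Finset α × Finset α)) :
    delC D (reorientC A C) = reorientC A (delC D C) := by
  ext X
  simp [delC, mem_reorientC]

lemma delC_delC (D D' : Finset α) (C : Set (Finset α × Finset α)) :
    delC D (delC D' C) = delC (D ∪ D') C := by
  ext X
  simp only [delC, Set.mem_ofPred_eq, disjoint_union_right]
  tauto

lemma exists_snd_subset_of_not_acyclic_contrC {T : Finset α} {C : Set (Finset α × Finset α)}
    (h : ¬ Acyclic (contrC T C)) : ∃ Y ∈ C, Y.2 ⊆ T := by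
  simp only [Acyclic, not_forall, not_not] at h
  obtain ⟨_, ⟨⟨Y, hY, -, rfl⟩, -⟩, hY2⟩ := h
  exact ⟨Y, hY, sdiff_eq_empty_iff_subset.1 hY2⟩

end Minors

namespace OM

variable {α : Type} [DecidableEq α]

lemma supp_nonempty (M : OM α) {X : Finset α × Finset α} (hX : X ∈ M.C) :
    (supp X).Nonempty := by
  rw [nonempty_iff_ne_empty]
  intro h
  have hX0 : X = (∅, ∅) := Prod.ext (union_eq_empty.1 h).1 (union_eq_empty.1 h).2
  exact M.not_empty_mem (hX0 ▸ hX)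

def reorientation (M : OM α) (A : Finset α) : OM α where
  C := reorientC A M.C
  disj := by
    rintro _ ⟨X, hX, rfl⟩
    exact disjoint_reorient (M.disj X hX)
  not_empty_mem h := M.not_empty_mem (by simpa [mem_reorientC, reorient] using h)
  neg_mem X hX := mem_reorientC.2 (M.neg_mem _ (mem_reorientC.1 hX))
  incomp := by
    rintro _ ⟨X, hX, rfl⟩ _ ⟨Y, hY, rfl⟩ hXY
    rw [supp_reorient, supp_reorient] at hXY
    rcases M.incomp X hX Y hY hXY with rfl | rfl
    exacts [Or.inl rfl, Or.inr rfl]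
  elimAx := by
    rintro _ ⟨X, hX, rfl⟩ _ ⟨Y, hY, rfl⟩ hne hne' q hq
    have hXY : X ≠ Y := by rintro rfl; exact hne rfl
    have hXY' : X ≠ Y.swap := by rintro rfl; exact hne' rfl
    simp only [mem_inter, mem_reorient_fst, mem_reorient_snd] at hq
    by_cases hqA : q ∈ A
    -- reorienting by `A` flips the sign at `q`, so `q ∈ Y.1 ∩ X.2`
    · have hYX' : Y ≠ X.swap := by rintro rfl; exact hXY' rfl
      obtain ⟨Z, hZ, h1, h2⟩ :=
        M.elimAx Y hY X hX hXY.symm hYX' q (mem_inter.2 ⟨by tauto, by tauto⟩)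
      rw [union_comm] at h1 h2
      exact ⟨reorient A Z, ⟨Z, hZ, rfl⟩, reorient_subset_erase h1 h2⟩
    · obtain ⟨Z, hZ, h1, h2⟩ :=
        M.elimAx X hX Y hY hXY hXY' q (mem_inter.2 ⟨by tauto, by tauto⟩)
      exact ⟨reorient A Z, ⟨Z, hZ, rfl⟩, reorient_subset_erase h1 h2⟩

def deletion (M : OM α) (D : Finset α) : OM α where
  C := delC D M.C
  disj X hX := M.disj X hX.1
  not_empty_mem h := M.not_empty_mem h.1
  neg_mem X hX := ⟨M.neg_mem X hX.1, by have := hX.2; rwa [← supp_swap X] at this⟩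
  incomp X hX Y hY := M.incomp X hX.1 Y hY.1
  elimAx X hX Y hY hne hne' q hq := by
    obtain ⟨Z, hZ, h1, h2⟩ := M.elimAx X hX.1 Y hY.1 hne hne' q hq
    refine ⟨Z, ⟨hZ, ?_⟩, h1, h2⟩
    exact disjoint_of_subset_left ((supp_subset_erase h1 h2).trans (erase_subset _ _))
      (disjoint_union_left.2 ⟨hX.2, hY.2⟩)

def Indep (M : OM α) (N : Finset α) : Prop := ∀ X ∈ M.C, ¬ supp X ⊆ N

lemma Indep.mono {M : OM α} {N N' : Finset α} (h : M.Indep N) (hN' : N' ⊆ N) : M.Indep N' :=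
  fun X hX hXN => h X hX (hXN.trans hN')

lemma Indep.reorientation {M : OM α} {N : Finset α} (h : M.Indep N) (A : Finset α) :
    (M.reorientation A).Indep N := by
  rintro _ ⟨X, hX, rfl⟩
  rw [supp_reorient]
  exact h X hX

lemma Indep.deletion {M : OM α} {N : Finset α} (h : M.Indep N) (D : Finset α) :
    (M.deletion D).Indep N :=
  fun X hX => h X hX.1

theorem exists_snd_subset_of_ssubset (M : OM α) {N : Finset α} {X W : Finset α × Finset α}
    (hX : X ∈ M.C) (hX2 : X.2 ⊆ N) (hW : W ∈ M.C) (hWX : supp W \ N ⊂ supp X \ N) :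
    ∃ Z ∈ M.C, Z.2 ⊆ N ∧ supp Z \ N ⊂ supp X \ N := by
  obtain ⟨n, hn⟩ : ∃ n, (W.2 \ N).card = n := ⟨_, rfl⟩
  induction n using Nat.strong_induction_on generalizing W with
  | _ n ih =>
  by_cases hW2 : W.2 ⊆ N
  · exact ⟨W, hW, hW2, hWX⟩
  obtain ⟨w, hwW, hwN⟩ := not_subset.1 hW2
  have hw : w ∈ W.2 \ N := mem_sdiff.2 ⟨hwW, hwN⟩
  have hw' : w ∈ supp X \ N := hWX.subset (mem_sdiff.2 ⟨mem_union_right _ hwW, hwN⟩)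
  have hwX : w ∈ X.1 :=
    (mem_union.1 (mem_sdiff.1 hw').1).resolve_right fun h => hwN (hX2 h)
  have hne : X ≠ W := by rintro rfl; exact disjoint_left.1 (M.disj X hX) hwX hwW
  have hne' : X ≠ W.swap := by rintro rfl; simp at hWX
  obtain ⟨Z, hZ, h1, h2⟩ := M.elimAx X hX W hW hne hne' w (mem_inter.2 ⟨hwX, hwW⟩)
  have hZX : supp Z \ N ⊆ (supp X \ N).erase w := by
    intro x hx
    obtain ⟨hxZ, hxN⟩ := mem_sdiff.1 hx
    obtain ⟨hxw, hxXW⟩ := mem_erase.1 (supp_subset_erase h1 h2 hxZ)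
    refine mem_erase.2 ⟨hxw, ?_⟩
    rcases mem_union.1 hxXW with hxX | hxW
    exacts [mem_sdiff.2 ⟨hxX, hxN⟩, hWX.subset (mem_sdiff.2 ⟨hxW, hxN⟩)]
  have hZW : Z.2 \ N ⊆ (W.2 \ N).erase w := by
    intro x hx
    obtain ⟨hxZ, hxN⟩ := mem_sdiff.1 hx
    obtain ⟨hxw, hxXW⟩ := mem_erase.1 (h2 hxZ)
    exact mem_erase.2 ⟨hxw, mem_sdiff.2 ⟨(mem_union.1 hxXW).resolve_left
      fun h => hxN (hX2 h), hxN⟩⟩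
  exact ih _ (hn ▸ card_lt_card (hZW.trans_ssubset (erase_ssubset hw))) hZ
    (hZX.trans_ssubset (erase_ssubset hw')) rfl

theorem not_acyclic_contrC (M : OM α) {N : Finset α} (hN : M.Indep N)
    {Y : Finset α × Finset α} (hY : Y ∈ M.C) (hY2 : Y.2 ⊆ N) : ¬ Acyclic (contrC N M.C) := by
  intro hacyc
  obtain ⟨n, hn⟩ : ∃ n, (supp Y \ N).card = n := ⟨_, rfl⟩
  induction n using Nat.strong_induction_on generalizing Y with
  | _ n ih =>
  have hpre : (Y.1 \ N, Y.2 \ N) ∈ contrPre N M.C :=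
    ⟨Y, hY, fun h => hN Y hY (sdiff_eq_empty_iff_subset.1 h), rfl⟩
  by_cases hmin : ∀ W ∈ contrPre N M.C, supp W ⊆ supp (Y.1 \ N, Y.2 \ N) →
      supp W = supp (Y.1 \ N, Y.2 \ N)
  · exact hacyc _ ⟨hpre, hmin⟩ (sdiff_eq_empty_iff_subset.2 hY2)
  push Not at hmin
  obtain ⟨_, ⟨W, hW, -, rfl⟩, hWY, hne⟩ := hmin
  rw [supp_sdiff, supp_sdiff] at hWY hne
  obtain ⟨Z, hZ, hZ2, hZY⟩ := M.exists_snd_subset_of_ssubset hY hY2 hW (hWY.ssubset_of_ne hne)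
  exact ih _ (hn ▸ card_lt_card hZY) hZ hZ2 rfl

theorem Indep.acyclic_contrC_of_subset {M : OM α} {N N' : Finset α} (hN : M.Indep N)
    (hN' : N' ⊆ N) (h : Acyclic (contrC N M.C)) : Acyclic (contrC N' M.C) := by
  by_contra h'
  obtain ⟨Y, hY, hY2⟩ := exists_snd_subset_of_not_acyclic_contrC h'
  exact M.not_acyclic_contrC hN hY (hY2.trans hN') h

theorem acyclic_contrC_of_not_acyclic_reorientation (M : OM α) {N : Finset α} {e : α}
    (heN : e ∉ N) (hN : M.Indep (insert e N))
    (hdel : Acyclic (contrC N (M.deletion {e}).C))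
    (hrev : ¬ Acyclic (contrC N (M.reorientation {e}).C)) : Acyclic (contrC N M.C) := by
  have he : ∀ X ∈ M.C, X.2 ⊆ N → e ∈ supp X := fun X hX hX2 => by
    by_contra he
    exact (M.deletion {e}).not_acyclic_contrC ((hN.mono (subset_insert _ _)).deletion _)
      ⟨hX, disjoint_singleton_right.2 he⟩ hX2 hdel
  obtain ⟨Y', hY', hY'2⟩ := exists_snd_subset_of_not_acyclic_contrC hrev
  set Y := reorient {e} Y'
  have hY : Y ∈ M.C := mem_reorientC.1 hY'
  have hY2 : Y.2 ⊆ insert e N := by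
    intro x hx
    rcases mem_reorient_snd.1 hx with ⟨hx, -⟩ | ⟨-, hx⟩
    exacts [mem_insert_of_mem (hY'2 hx), mem_insert.2 (Or.inl (mem_singleton.1 hx))]
  have heY : e ∈ Y.2 := by
    by_contra heY
    have hY2' : Y.2 ⊆ N := fun x hx =>
      (mem_insert.1 (hY2 hx)).resolve_left (by rintro rfl; exact heY hx)
    rcases mem_reorient_fst.1 ((mem_union.1 (he Y hY hY2')).resolve_right heY) with
      ⟨-, h⟩ | ⟨h, -⟩
    exacts [h (mem_singleton_self e), heN (hY'2 h)]
  by_contra hX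
  obtain ⟨X, hX, hX2⟩ := exists_snd_subset_of_not_acyclic_contrC hX
  have heX : e ∈ X.1 := (mem_union.1 (he X hX hX2)).resolve_right fun h => heN (hX2 h)
  have hXY : X ≠ Y := by rintro rfl; exact heN (hX2 heY)
  have hXY' : X ≠ Y.swap := by
    rintro rfl
    exact hN _ hX (union_subset hY2 (hX2.trans (subset_insert _ _)))
  obtain ⟨Z, hZ, h1, h2⟩ := M.elimAx X hX Y hY hXY hXY' e (mem_inter.2 ⟨heX, heY⟩)
  have hZ2 : Z.2 ⊆ N := by
    intro x hx
    obtain ⟨hxe, hx⟩ := mem_erase.1 (h2 hx)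
    rcases mem_union.1 hx with hx | hx
    exacts [hX2 hx, (mem_insert.1 (hY2 hx)).resolve_left hxe]
  exact (mem_erase.1 (supp_subset_erase h1 h2 (he Z hZ hZ2))).1 rfl

end OM

section NBC

variable {α : Type} [DecidableEq α] [LinearOrder α] {M : OM α} {N : Finset α}

lemma IsNBC.mono (h : IsNBC M N) {N' : Finset α} (hN' : N' ⊆ N) : IsNBC M N' :=
  fun X hX hne hXN => h X hX hne (hXN.trans hN')

lemma IsNBC.indep (h : IsNBC M N) : M.Indep N :=
  fun X hX hXN => h X hX (M.supp_nonempty hX) ((erase_subset _ _).trans hXN)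

lemma IsNBC.indep_insert (h : IsNBC M N) {e : α} (he : ∀ x ∈ N, x < e) :
    M.Indep (insert e N) := by
  intro X hX hXN
  refine h X hX (M.supp_nonempty hX) fun x hx => ?_
  obtain ⟨hxmax, hxX⟩ := mem_erase.1 hx
  rcases mem_insert.1 (hXN hxX) with rfl | hxN
  · rcases mem_insert.1 (hXN (max'_mem _ (M.supp_nonempty hX))) with hmax | hmax
    · exact absurd hmax.symm hxmax
    · exact absurd (he _ hmax) (not_lt.2 (le_max' _ _ hxX))
  · exact hxN

end NBC

section Levels

variable {m k : ℕ} {e : Fin m}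

lemma mem_Ek {x : Fin m} : x ∈ Ek m k ↔ (x : ℕ) < k := by
  simp [Ek]

lemma mem_Ek_of_val_eq (hk : 1 ≤ k) (he : (e : ℕ) = k - 1) : e ∈ Ek m k :=
  mem_Ek.2 (by omega)

lemma notMem_Ek_pred (he : (e : ℕ) = k - 1) : e ∉ Ek m (k - 1) := by
  simp [mem_Ek, he]

lemma lt_of_mem_Ek_pred (he : (e : ℕ) = k - 1) {x : Fin m} (hx : x ∈ Ek m (k - 1)) : x < e :=
  Fin.lt_def.2 (he ▸ mem_Ek.1 hx)

lemma compl_Ek_subset_compl_Ek_pred : (Ek m k)ᶜ ⊆ (Ek m (k - 1))ᶜ :=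
  compl_subset_compl.2 fun x hx => mem_Ek.2 (by have := mem_Ek.1 hx; omega)

lemma subset_Ek_pred (he : (e : ℕ) = k - 1) {N : Finset (Fin m)} (hN : N ⊆ Ek m k)
    (heN : e ∉ N) : N ⊆ Ek m (k - 1) := by
  intro x hx
  have hxk := mem_Ek.1 (hN hx)
  have hxe : (x : ℕ) ≠ k - 1 := fun h => heN (Fin.ext (h.trans he.symm) ▸ hx)
  exact mem_Ek.2 (by omega)

lemma Ek_sdiff_of_mem (hk : 1 ≤ k) (he : (e : ℕ) = k - 1) {N : Finset (Fin m)} (heN : e ∈ N) :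
    Ek m (k - 1) \ N.erase e = Ek m k \ N := by
  ext x
  simp only [mem_sdiff, mem_erase, mem_Ek, not_and]
  constructor
  · rintro ⟨hx, hxN⟩
    exact ⟨by omega, fun h => hxN (fun hxe => by simp [hxe, he] at hx) h⟩
  · rintro ⟨hx, hxN⟩
    have hxe : x ≠ e := by rintro rfl; exact hxN heN
    exact ⟨by have := Fin.val_ne_of_ne hxe; omega, fun _ => hxN⟩

lemma Ek_sdiff_of_notMem (hk : 1 ≤ k) (he : (e : ℕ) = k - 1) {N : Finset (Fin m)}
    (heN : e ∉ N) : Ek m k \ N = insert e (Ek m (k - 1) \ N) := by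
  ext x
  simp only [mem_sdiff, mem_insert, mem_Ek]
  constructor
  · rintro ⟨hx, hxN⟩
    by_cases hxe : x = e
    · exact Or.inl hxe
    · exact Or.inr ⟨by have := Fin.val_ne_of_ne hxe; omega, hxN⟩
  · rintro (rfl | ⟨hx, hxN⟩)
    exacts [⟨by omega, heN⟩, ⟨by omega, hxN⟩]

end Levels

section Transfer

variable {m : ℕ} (M : OM (Fin m)) {k : ℕ} {e : Fin m}

lemma MNA_eq_contrC (N A : Finset (Fin m)) :
    MNA M k N A = contrC N ((M.deletion (Ek m k \ N)).reorientation A).C :=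
  (contrC_reorientC _ _ _).symm

lemma MNA_insert {N A : Finset (Fin m)} (heA : e ∉ A) :
    MNA M k N (insert e A) = reorientC {e} (MNA M k N A) :=
  (reorientC_singleton_reorientC heA _).symm

lemma MNA_pred_erase (hk : 1 ≤ k) (he : (e : ℕ) = k - 1) {N : Finset (Fin m)} (heN : e ∈ N)
    (A : Finset (Fin m)) :
    MNA M (k - 1) (N.erase e) A = contrC (N.erase e) ((M.deletion (Ek m k \ N)).reorientation A).C := by
  rw [MNA_eq_contrC, Ek_sdiff_of_mem hk he heN]

theorem acyclic_MNA_pred_erase (hk : 1 ≤ k) (he : (e : ℕ) = k - 1) {N A : Finset (Fin m)}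
    (hNBC : IsNBC M N) (heN : e ∈ N) (h : Acyclic (MNA M k N A)) :
    Acyclic (MNA M (k - 1) (N.erase e) A) := by
  rw [MNA_eq_contrC] at h
  rw [MNA_pred_erase M hk he heN]
  exact ((hNBC.indep.deletion _).reorientation _).acyclic_contrC_of_subset (erase_subset _ _) h

theorem acyclic_reorientC_MNA_pred_erase (hk : 1 ≤ k) (he : (e : ℕ) = k - 1)
    {N A : Finset (Fin m)} (hNBC : IsNBC M N) (heN : e ∈ N) (h : Acyclic (MNA M k N A)) :
    Acyclic (reorientC {e} (MNA M (k - 1) (N.erase e) A)) := by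
  have hrev : Acyclic (contrC N (((M.deletion (Ek m k \ N)).reorientation A).reorientation {e}).C) := by
    rwa [OM.reorientation, contrC_reorientC_of_subset (singleton_subset_iff.2 heN), ← MNA_eq_contrC]
  rw [MNA_pred_erase M hk he heN, ← contrC_reorientC]
  exact (((hNBC.indep.deletion _).reorientation _).reorientation _).acyclic_contrC_of_subset
    (erase_subset _ _) hrev

theorem acyclic_MNA_pred (hk : 1 ≤ k) (he : (e : ℕ) = k - 1) {N A : Finset (Fin m)}
    (hN : N ⊆ Ek m (k - 1)) (hNBC : IsNBC M N) (h : Acyclic (MNA M k N A))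
    (hrev : ¬ Acyclic (reorientC {e} (MNA M (k - 1) N A))) : Acyclic (MNA M (k - 1) N A) := by
  have heN : e ∉ N := fun h => notMem_Ek_pred he (hN h)
  set B := (M.deletion (Ek m (k - 1) \ N)).reorientation A
  have hdel : MNA M k N A = contrC N (B.deletion {e}).C := by
    rw [MNA, Ek_sdiff_of_notMem hk he heN, insert_eq, ← delC_delC, ← contrC_reorientC,
      ← delC_reorientC]
    rfl
  rw [MNA_eq_contrC] at hrev ⊢
  rw [← contrC_reorientC] at hrev
  exact B.acyclic_contrC_of_not_acyclic_reorientation heN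
    (((hNBC.indep_insert fun x hx => lt_of_mem_Ek_pred he (hN hx)).deletion _).reorientation _)
    (hdel ▸ h) hrev

end Transfer

section Bijection

variable {m : ℕ} (M : OM (Fin m)) {k : ℕ} {e : Fin m}

lemma mem_NFam {N A : Finset (Fin m)} :
    (N, A) ∈ NFam M k ↔
      N ⊆ Ek m k ∧ IsNBC M N ∧ A ⊆ (Ek m k)ᶜ ∧ Acyclic (MNA M k N A) :=
  Iff.rfl

theorem theta_mapsTo (hk : 1 ≤ k) (he : (e : ℕ) = k - 1) :
    Set.MapsTo (theta M (k - 1) e) (NFam M k) (NFam M (k - 1)) := by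
  rintro ⟨N, A⟩ hp
  obtain ⟨hN, hNBC, hA, hac⟩ := (mem_NFam M).1 hp
  have hA' : A ⊆ (Ek m (k - 1))ᶜ := hA.trans compl_Ek_subset_compl_Ek_pred
  by_cases heN : e ∈ N
  · simp only [theta, heN, if_true]
    exact ⟨subset_Ek_pred he ((erase_subset _ _).trans hN) (notMem_erase e N),
      hNBC.mono (erase_subset _ _), hA', acyclic_MNA_pred_erase M hk he hNBC heN hac⟩
  have hN' : N ⊆ Ek m (k - 1) := subset_Ek_pred he hN heN
  by_cases hrev : Acyclic (reorientC {e} (MNA M (k - 1) N A))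
  · have heA : e ∉ A := fun h => mem_compl.1 (hA h) (mem_Ek_of_val_eq hk he)
    simp only [theta, heN, hrev, if_true, if_false]
    exact ⟨hN', hNBC, insert_subset (mem_compl.2 (notMem_Ek_pred he)) hA',
      by rwa [MNA_insert M heA]⟩
  · simp only [theta, heN, hrev, if_false]
    exact ⟨hN', hNBC, hA', acyclic_MNA_pred M hk he hN' hNBC hac hrev⟩

theorem theta_psi (he : (e : ℕ) = k - 1) {p : Finset (Fin m) × Finset (Fin m)}
    (hp : p ∈ NFam M (k - 1)) : theta M (k - 1) e (psi M (k - 1) e p) = p := by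
  obtain ⟨N, A⟩ := p
  obtain ⟨hN, -, -, hac⟩ := (mem_NFam M).1 hp
  have heN : e ∉ N := fun h => notMem_Ek_pred he (hN h)
  by_cases heA : e ∈ A
  · have hrev : Acyclic (reorientC {e} (MNA M (k - 1) N (A.erase e))) := by
      rwa [← MNA_insert M (notMem_erase e A), insert_erase heA]
    simp [psi, theta, heA, heN, hrev, insert_erase heA]
  by_cases hrev : Acyclic (reorientC {e} (MNA M (k - 1) N A))
  · simp [psi, theta, heA, hrev, erase_insert heN]
  · simp [psi, theta, heA, heN, hrev]

theorem psi_theta (hk : 1 ≤ k) (he : (e : ℕ) = k - 1) {p : Finset (Fin m) × Finset (Fin m)}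
    (hp : p ∈ NFam M k) : psi M (k - 1) e (theta M (k - 1) e p) = p := by
  obtain ⟨N, A⟩ := p
  obtain ⟨-, hNBC, hA, hac⟩ := (mem_NFam M).1 hp
  have heA : e ∉ A := fun h => mem_compl.1 (hA h) (mem_Ek_of_val_eq hk he)
  by_cases heN : e ∈ N
  · have hrev := acyclic_reorientC_MNA_pred_erase M hk he hNBC heN hac
    simp [psi, theta, heN, heA, hrev, insert_erase heN]
  by_cases hrev : Acyclic (reorientC {e} (MNA M (k - 1) N A))
  · simp [psi, theta, heN, hrev, erase_insert heA]
  · simp [psi, theta, heN, heA, hrev]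

end Bijection

/-- **`θ_k` is a two-sided inverse of `ψ_k`**: `θ_k` maps `𝒩_k` into `𝒩_{k−1}`,
`θ_k ∘ ψ_k` is the identity on `𝒩_{k−1}`, and `ψ_k ∘ θ_k` is the identity on `𝒩_k`. -/
theorem stmt_6 (m : ℕ) (M : OM (Fin m))
    (k : ℕ) (hk1 : 1 ≤ k) (hkm : k ≤ m) :
    Set.MapsTo (theta M (k - 1) ⟨k - 1, by omega⟩) (NFam M k) (NFam M (k - 1)) ∧
    (∀ p ∈ NFam M (k - 1),
      theta M (k - 1) ⟨k - 1, by omega⟩ (psi M (k - 1) ⟨k - 1, by omega⟩ p) = p) ∧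
    (∀ p ∈ NFam M k,
      psi M (k - 1) ⟨k - 1, by omega⟩ (theta M (k - 1) ⟨k - 1, by omega⟩ p) = p) :=
  ⟨theta_mapsTo M hk1 rfl, fun _ hp => theta_psi M rfl hp, fun _ hp => psi_theta M hk1 rfl hp⟩
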